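/- arXiv:2510.20789 — 2 statements merged into one kernel-verified Lean document; each statement's English description precedes it below -/
import Mathlib

section
/- Let n, k be positive integers with 1 ≤ k ≤ n and let C ∈ ℂ^{n×n} be Hermitian. Then μ(k,C) := max{ Tr(C X) : X ∈ I_k } equals max(0, max{ λ_max(C_S) : S ⊆ {1,…,n}, 1 ≤ |S| ≤ k }), where C_S denotes the principal submatrix of C whose rows and columns are indexed by S, and λ_max denotes the largest eigenvalue of a Hermitian matrix. -/
open Matrix BigOperators Finset ComplexOrder

noncomputable section

/-- The number of nonzero entries of a vector in `ℂ^n`. -/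
def suppCard {n : ℕ} (v : Fin n → ℂ) : ℕ :=
  (Finset.univ.filter fun i => v i ≠ 0).card

/-- A matrix `X` is `k`-incoherent if it can be written as `∑ vᵢ vᵢ*` where each `vᵢ`
has at most `k` nonzero entries. -/
def KIncoherent {n : ℕ} (k : ℕ) (X : Matrix (Fin n) (Fin n) ℂ) : Prop :=
  ∃ (m : ℕ) (v : Fin m → (Fin n → ℂ)),
    (∀ i, suppCard (v i) ≤ k) ∧ X = ∑ i, vecMulVec (v i) (star (v i))

/-- The set `I_k` of positive semidefinite, `k`-incoherent matrices with trace at most `1`. -/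
def Ik (n k : ℕ) : Set (Matrix (Fin n) (Fin n) ℂ) :=
  {X | X.PosSemidef ∧ KIncoherent k X ∧ X.trace.re ≤ 1}

/-- The Gram matrix of a list of vectors in `ℂ^d`. -/
def gramMatrix {n d : ℕ} (ψ : Fin n → (Fin d → ℂ)) : Matrix (Fin n) (Fin n) ℂ :=
  Matrix.of fun i j => star (ψ i) ⬝ᵥ ψ j

/-- A list of states `ψ₁, …, ψₙ` is `k`-learnable if there is a POVM indexed by the
`k`-element subsets of `{1, …, n}` such that `⟨ψᵢ, M_S ψᵢ⟩ = 0` whenever `i ∉ S`. -/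
def KLearnable {n d : ℕ} (k : ℕ) (ψ : Fin n → (Fin d → ℂ)) : Prop :=
  ∃ M : {S : Finset (Fin n) // S.card = k} → Matrix (Fin d) (Fin d) ℂ,
    (∀ S, (M S).PosSemidef) ∧ (∑ S, M S) = 1 ∧
    ∀ (S : {S : Finset (Fin n) // S.card = k}) (i : Fin n),
      i ∉ S.val → star (ψ i) ⬝ᵥ ((M S) *ᵥ ψ i) = 0

/-- The Frobenius norm of a square complex matrix. -/
def frobNorm {m : ℕ} (A : Matrix (Fin m) (Fin m) ℂ) : ℝ :=
  Real.sqrt (∑ i, ∑ j, ‖A i j‖ ^ 2)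

/-!
A `k`-sparse vector `v` supported in `S`, `|S| ≤ k`, contributes `v* C v = w* C_S w` to
`Tr(C X)`, where `w = v|_S`, and the Rayleigh bound `w* C_S w ≤ λ_max(C_S) ‖w‖²` together with
`Tr X ≤ 1` gives `Tr(C X) ≤ max(0, max_S λ_max(C_S))`. The bound is attained by `X = 0`, or by
`X = v v*` where `v` is a unit top eigenvector of an optimal `C_S` extended by zero.
-/

namespace Matrix

section Restrict

variable {α ι : Type*} [Fintype ι] [CommSemiring α] {S : Finset ι}

theorem dotProduct_eq_restrict_of_support_subset (w v : ι → α) (hv : ∀ i ∉ S, v i = 0) :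
    w ⬝ᵥ v = (fun i : S => w i) ⬝ᵥ (fun i : S => v i) := by
  rw [dotProduct, ← Finset.sum_subset (Finset.subset_univ S) fun i _ hi => by simp [hv i hi]]
  exact (Finset.sum_coe_sort S _).symm

theorem star_dotProduct_mulVec_eq_submatrix [StarRing α] (C : Matrix ι ι α) (v : ι → α)
    (hv : ∀ i ∉ S, v i = 0) :
    star v ⬝ᵥ (C *ᵥ v) = star (fun i : S => v i) ⬝ᵥ
      (C.submatrix (Subtype.val : S → ι) Subtype.val *ᵥ fun i : S => v i) := by
  rw [dotProduct_comm, dotProduct_eq_restrict_of_support_subset _ _ fun i hi => by simp [hv i hi],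
    dotProduct_comm]
  congr 1
  funext i
  exact dotProduct_eq_restrict_of_support_subset _ _ hv

end Restrict

theorem trace_mul_vecMulVec_star {α ι : Type*} [Fintype ι] [CommSemiring α] [StarRing α]
    (C : Matrix ι ι α) (v : ι → α) :
    (C * vecMulVec v (star v)).trace = star v ⬝ᵥ (C *ᵥ v) := by
  rw [mul_vecMulVec, trace_vecMulVec, dotProduct_comm]

namespace IsHermitian
open scoped MatrixOrder

variable {𝕜 ι : Type*} [RCLike 𝕜] [Fintype ι] [DecidableEq ι] {A : Matrix ι ι 𝕜}

theorem re_dotProduct_mulVec_le (hA : A.IsHermitian) {c : ℝ} (hc : ∀ i, hA.eigenvalues i ≤ c)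
    (x : ι → 𝕜) :
    RCLike.re (star x ⬝ᵥ (A *ᵥ x)) ≤ c * RCLike.re (star x ⬝ᵥ x) := by
  -- Loewner order: the spectrum of `A` is the range of its eigenvalues.
  have hle : A ≤ algebraMap ℝ (Matrix ι ι 𝕜) c :=
    le_algebraMap_of_spectrum_le fun _ hμ => by
      obtain ⟨i, rfl⟩ := hA.spectrum_real_eq_range_eigenvalues ▸ hμ
      exact hc i
  have := (Matrix.le_iff.mp hle).re_dotProduct_nonneg x
  rw [Algebra.algebraMap_eq_smul_one, sub_mulVec, smul_mulVec, one_mulVec, dotProduct_sub,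
    dotProduct_smul, map_sub, RCLike.real_smul_eq_coe_mul, RCLike.re_ofReal_mul] at this
  linarith

theorem exists_re_dotProduct_mulVec_eq_iSup_eigenvalues [Nonempty ι] (hA : A.IsHermitian) :
    ∃ x : ι → 𝕜, RCLike.re (star x ⬝ᵥ x) = 1 ∧
      RCLike.re (star x ⬝ᵥ (A *ᵥ x)) = ⨆ i, hA.eigenvalues i := by
  obtain ⟨j, hj⟩ := exists_eq_ciSup_of_finite (f := hA.eigenvalues)
  have hnorm : RCLike.re (star ⇑(hA.eigenvectorBasis j) ⬝ᵥ ⇑(hA.eigenvectorBasis j)) = 1 := by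
    rw [dotProduct_comm, ← EuclideanSpace.inner_eq_star_dotProduct, inner_self_eq_norm_sq,
      hA.eigenvectorBasis.orthonormal.1 j, one_pow]
  refine ⟨hA.eigenvectorBasis j, hnorm, ?_⟩
  rw [hA.mulVec_eigenvectorBasis, dotProduct_smul, RCLike.real_smul_eq_coe_mul,
    RCLike.re_ofReal_mul, hnorm, mul_one, hj]

end IsHermitian

end Matrix

def principalLambdaMaxes {n : ℕ} (k : ℕ) (C : Matrix (Fin n) (Fin n) ℂ) : Set ℝ :=
  {t : ℝ | ∃ S : Finset (Fin n), S.Nonempty ∧ S.card ≤ k ∧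
    ∃ h : (C.submatrix (Subtype.val : ↥S → Fin n) (Subtype.val : ↥S → Fin n)).IsHermitian,
      t = ⨆ i : ↥S, h.eigenvalues i}

section Incoherent

variable {n k : ℕ} {C : Matrix (Fin n) (Fin n) ℂ}

theorem suppCard_le_card_of_support_subset {v : Fin n → ℂ} {S : Finset (Fin n)}
    (hv : ∀ i ∉ S, v i = 0) : suppCard v ≤ S.card :=
  Finset.card_le_card fun i hi => by
    by_contra hiS
    exact (Finset.mem_filter.mp hi).2 (hv i hiS)

theorem zero_mem_Ik : (0 : Matrix (Fin n) (Fin n) ℂ) ∈ Ik n k :=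
  ⟨PosSemidef.zero, ⟨0, Fin.elim0, Fin.rec0, by simp⟩, by simp⟩

theorem vecMulVec_mem_Ik {v : Fin n → ℂ} (hv : suppCard v ≤ k) (hnorm : (star v ⬝ᵥ v).re ≤ 1) :
    vecMulVec v (star v) ∈ Ik n k :=
  ⟨posSemidef_vecMulVec_self_star v, ⟨1, fun _ => v, fun _ => hv, by simp⟩,
    by rwa [trace_vecMulVec, dotProduct_comm]⟩

theorem principalLambdaMaxes_finite (hC : C.IsHermitian) :
    (principalLambdaMaxes k C).Finite :=
  (Set.finite_range fun S : Finset (Fin n) =>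
    ⨆ i : ↥S, (hC.submatrix (Subtype.val : ↥S → Fin n)).eigenvalues i).subset
    fun _ ⟨S, _, _, _, ht⟩ => ⟨S, ht.symm⟩

theorem exists_suppCard_le_of_mem_principalLambdaMaxes {t : ℝ}
    (ht : t ∈ principalLambdaMaxes k C) :
    ∃ v : Fin n → ℂ, suppCard v ≤ k ∧ (star v ⬝ᵥ v).re = 1 ∧ (star v ⬝ᵥ (C *ᵥ v)).re = t := by
  obtain ⟨S, hSne, hSk, hS, rfl⟩ := ht
  have : Nonempty S := hSne.to_subtype
  obtain ⟨w, hw1, hwC⟩ := hS.exists_re_dotProduct_mulVec_eq_iSup_eigenvalues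
  set v : Fin n → ℂ := fun i => if hi : i ∈ S then w ⟨i, hi⟩ else 0
  have hv : ∀ i ∉ S, v i = 0 := fun i hi => dif_neg hi
  have hvw : (fun i : S => v i) = w := funext fun i => dif_pos i.2
  refine ⟨v, (suppCard_le_card_of_support_subset hv).trans hSk, ?_, ?_⟩
  · rw [dotProduct_eq_restrict_of_support_subset _ _ hv]
    change (star (fun i : S => v i) ⬝ᵥ fun i : S => v i).re = 1
    rwa [hvw]
  · rwa [star_dotProduct_mulVec_eq_submatrix C v hv, hvw]

theorem re_dotProduct_mulVec_le_of_suppCard_le (hC : C.IsHermitian) {v : Fin n → ℂ}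
    (hv : suppCard v ≤ k) :
    (star v ⬝ᵥ (C *ᵥ v)).re ≤ max 0 (sSup (principalLambdaMaxes k C)) * (star v ⬝ᵥ v).re := by
  set S : Finset (Fin n) := Finset.univ.filter fun i => v i ≠ 0
  have hvS : ∀ i ∉ S, v i = 0 := by simp [S]
  rcases S.eq_empty_or_nonempty with hS | hS
  · obtain rfl : v = 0 := funext fun i => hvS i (by simp [hS])
    simp
  have : Nonempty S := hS.to_subtype
  have hCS := hC.submatrix (Subtype.val : S → Fin n)
  have hmem : ⨆ i : S, hCS.eigenvalues i ∈ principalLambdaMaxes k C := ⟨S, hS, hv, hCS, rfl⟩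
  have hle : ∀ i, hCS.eigenvalues i ≤ max 0 (sSup (principalLambdaMaxes k C)) := fun i =>
    (le_ciSup (Set.finite_range _).bddAbove i).trans <|
      (le_csSup (principalLambdaMaxes_finite hC).bddAbove hmem).trans (le_max_right _ _)
  rw [star_dotProduct_mulVec_eq_submatrix C v hvS,
    dotProduct_eq_restrict_of_support_subset (star v) v hvS]
  exact hCS.re_dotProduct_mulVec_le hle _

theorem re_trace_mul_le_of_mem_Ik {X : Matrix (Fin n) (Fin n) ℂ} {M : ℝ} (hM : 0 ≤ M)
    (hC : ∀ v : Fin n → ℂ, suppCard v ≤ k → (star v ⬝ᵥ (C *ᵥ v)).re ≤ M * (star v ⬝ᵥ v).re)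
    (hX : X ∈ Ik n k) : (C * X).trace.re ≤ M := by
  obtain ⟨-, ⟨m, v, hv, rfl⟩, htr⟩ := hX
  calc (C * ∑ i, vecMulVec (v i) (star (v i))).trace.re
      = ∑ i, (star (v i) ⬝ᵥ (C *ᵥ v i)).re := by
        simp only [Finset.mul_sum, trace_sum, Complex.re_sum, trace_mul_vecMulVec_star]
    _ ≤ ∑ i, M * (star (v i) ⬝ᵥ v i).re := Finset.sum_le_sum fun i _ => hC (v i) (hv i)
    _ = M * (∑ i, vecMulVec (v i) (star (v i))).trace.re := by
        simp only [← Finset.mul_sum, trace_sum, Complex.re_sum, trace_vecMulVec, dotProduct_comm]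
    _ ≤ M := mul_le_of_le_one_right hM htr

end Incoherent

theorem mu_eq_max_lambdaMax_submatrix_general (n k : ℕ)
    (C : Matrix (Fin n) (Fin n) ℂ) (hC : C.IsHermitian) :
    IsGreatest {t : ℝ | ∃ X ∈ Ik n k, t = ((C * X).trace).re}
      (max 0 (sSup {t : ℝ | ∃ S : Finset (Fin n), S.Nonempty ∧ S.card ≤ k ∧
        ∃ h : (C.submatrix (Subtype.val : ↥S → Fin n)
            (Subtype.val : ↥S → Fin n)).IsHermitian,
          t = ⨆ i : ↥S, h.eigenvalues i})) := by
  change IsGreatest _ (max 0 (sSup (principalLambdaMaxes k C)))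
  refine ⟨?_, ?_⟩
  · by_cases hpos : 0 < sSup (principalLambdaMaxes k C)
    · -- `sSup ∅ = 0`
      have hne : (principalLambdaMaxes k C).Nonempty :=
        Set.nonempty_iff_ne_empty.mpr fun h => by simp [h] at hpos
      obtain ⟨v, hvk, hv1, hvC⟩ := exists_suppCard_le_of_mem_principalLambdaMaxes
        (hne.csSup_mem (principalLambdaMaxes_finite hC))
      refine ⟨_, vecMulVec_mem_Ik hvk hv1.le, ?_⟩
      rw [max_eq_right hpos.le, trace_mul_vecMulVec_star, hvC]
    · exact ⟨0, zero_mem_Ik, by simp [max_eq_left (not_lt.mp hpos)]⟩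
  · rintro _ ⟨X, hX, rfl⟩
    exact re_trace_mul_le_of_mem_Ik (le_max_left _ _)
      (fun v hv => re_dotProduct_mulVec_le_of_suppCard_le hC hv) hX

/-- `μ(k, C) = max(0, max over principal submatrices of size at most k of the largest
eigenvalue)`, for a Hermitian matrix `C`, and the maximum over `I_k` is attained. -/
theorem mu_eq_max_lambdaMax_submatrix (n k : ℕ) (hn : 0 < n) (hk : 1 ≤ k) (hkn : k ≤ n)
    (C : Matrix (Fin n) (Fin n) ℂ) (hC : C.IsHermitian) :
    IsGreatest {t : ℝ | ∃ X ∈ Ik n k, t = ((C * X).trace).re}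
      (max 0 (sSup {t : ℝ | ∃ S : Finset (Fin n), S.Nonempty ∧ S.card ≤ k ∧
        ∃ h : (C.submatrix (Subtype.val : ↥S → Fin n)
            (Subtype.val : ↥S → Fin n)).IsHermitian,
          t = ⨆ i : ↥S, h.eigenvalues i})) :=
  mu_eq_max_lambdaMax_submatrix_general n k C hC
end
end

section
/- Let n ≥ 2 and let M ∈ ℂ^{n×n} be Hermitian. If ‖M − I/n‖_F ≤ 1/n, then M is positive semidefinite and 2-incoherent (and hence k-incoherent for every k with 2 ≤ k ≤ n). -/
/-!
Let `C` be the comparison matrix of `M`, with `Re Mᵢᵢ` on the diagonal and `-|Mᵢⱼ|` off it.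
Writing `M = I/n + A`, Cauchy–Schwarz gives `xᵀ C x ≥ (1/n - ‖A‖_F) |x|² ≥ 0`, so `C` is positive
semidefinite. A positive semidefinite Z-matrix has a positive vector `u` with `C u ≥ 0` (induction
on the size, passing to the Schur complement of the first diagonal entry); this says that
`D M D` is diagonally dominant for `D = diag u`. A diagonally dominant Hermitian matrix is a
nonnegative diagonal matrix plus a sum of rank-one matrices `w w*` with `w` supported on a pair
`{i, j}`, and conjugating by `D⁻¹` keeps these supports.
-/

open Matrix BigOperators Finset ComplexOrder

noncomputable section

lemma Matrix.PosSemidef.apply_eq_zero_of_diag_eq_zero {𝕜 ι : Type*} [RCLike 𝕜] [Fintype ι]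
    [DecidableEq ι] {A : Matrix ι ι 𝕜} (hA : A.PosSemidef) {i : ι} (hii : A i i = 0) (j : ι) :
    A j i = 0 := by
  have h := (hA.dotProduct_mulVec_zero_iff (Pi.single i 1)).mp (by simp [hii])
  simpa using congrFun h j

section ZMatrix

variable {n : ℕ}

lemma dotProduct_mulVec_cons {R : Type*} [CommRing R] {C : Matrix (Fin (n + 1)) (Fin (n + 1)) R}
    (hC : C.IsSymm) (t : R) (y : Fin n → R) :
    Fin.cons t y ⬝ᵥ C *ᵥ Fin.cons t y =
      C 0 0 * t ^ 2 + 2 * t * ((fun j => C 0 j.succ) ⬝ᵥ y) +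
        y ⬝ᵥ C.submatrix Fin.succ Fin.succ *ᵥ y := by
  have hsymm : ∀ j : Fin n, C j.succ 0 = C 0 j.succ := fun j => hC.apply 0 j.succ
  have hcomm : ∀ x, y x * (C 0 x.succ * t) = t * (C 0 x.succ * y x) := fun x => by ring
  simp only [dotProduct, mulVec, Fin.sum_univ_succ, Fin.cons_zero, Fin.cons_succ,
    submatrix_apply, mul_add, Finset.sum_add_distrib, hsymm, hcomm,
    ← Finset.mul_sum]
  ring

def schurComplementAtZero {K : Type*} [Field K] (C : Matrix (Fin (n + 1)) (Fin (n + 1)) K) :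
    Matrix (Fin n) (Fin n) K :=
  of fun i j => C i.succ j.succ - C 0 i.succ * C 0 j.succ / C 0 0

lemma schurComplementAtZero_mulVec {K : Type*} [Field K]
    (C : Matrix (Fin (n + 1)) (Fin (n + 1)) K) (y : Fin n → K) (k : Fin n) :
    (schurComplementAtZero C *ᵥ y) k =
      (C.submatrix Fin.succ Fin.succ *ᵥ y) k -
        C 0 k.succ * ((fun j => C 0 j.succ) ⬝ᵥ y) / C 0 0 := by
  simp only [schurComplementAtZero, mulVec, dotProduct, of_apply, submatrix_apply, sub_mul,
    Finset.sum_sub_distrib, Finset.mul_sum, Finset.sum_div]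
  congr 1
  exact Finset.sum_congr rfl fun j _ => by ring

lemma dotProduct_schurComplementAtZero_mulVec {K : Type*} [Field K]
    (C : Matrix (Fin (n + 1)) (Fin (n + 1)) K) (y : Fin n → K) :
    y ⬝ᵥ schurComplementAtZero C *ᵥ y =
      y ⬝ᵥ C.submatrix Fin.succ Fin.succ *ᵥ y - ((fun j => C 0 j.succ) ⬝ᵥ y) ^ 2 / C 0 0 := by
  simp only [dotProduct, schurComplementAtZero_mulVec, mul_sub, Finset.sum_sub_distrib]
  congr 1
  rw [sq, Finset.sum_mul, Finset.sum_div]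
  exact Finset.sum_congr rfl fun j _ => by ring

lemma posSemidef_schurComplementAtZero {C : Matrix (Fin (n + 1)) (Fin (n + 1)) ℝ}
    (hC : C.PosSemidef) (h0 : 0 < C 0 0) : (schurComplementAtZero C).PosSemidef := by
  have hsymm := isHermitian_iff_isSymm.mp hC.isHermitian
  refine .of_dotProduct_mulVec_nonneg ?_ fun y => ?_
  · refine isHermitian_iff_isSymm.mpr (IsSymm.ext fun i j => ?_)
    simp only [schurComplementAtZero, of_apply, hsymm.apply]
    ring
  · have h := hC.dotProduct_mulVec_nonneg (Fin.cons (-((fun j => C 0 j.succ) ⬝ᵥ y) / C 0 0) y)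
    rw [star_trivial, dotProduct_mulVec_cons hsymm] at h
    rw [star_trivial, dotProduct_schurComplementAtZero_mulVec]
    convert h using 1
    field_simp
    ring

lemma schurComplementAtZero_apply_nonpos {C : Matrix (Fin (n + 1)) (Fin (n + 1)) ℝ}
    (h0 : 0 ≤ C 0 0) (hZ : ∀ i j, i ≠ j → C i j ≤ 0) {i j : Fin n} (hij : i ≠ j) :
    schurComplementAtZero C i j ≤ 0 := by
  have hi := hZ 0 i.succ (Fin.succ_ne_zero i).symm
  have hj := hZ 0 j.succ (Fin.succ_ne_zero j).symm
  have hij' := hZ i.succ j.succ (Fin.succ_injective _ |>.ne hij)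
  have := div_nonneg (mul_nonneg_of_nonpos_of_nonpos hi hj) h0
  simp only [schurComplementAtZero, of_apply]
  linarith

theorem exists_pos_mulVec_nonneg_of_posSemidef :
    ∀ {n : ℕ} {C : Matrix (Fin n) (Fin n) ℝ}, C.PosSemidef → (∀ i j, i ≠ j → C i j ≤ 0) →
      ∃ u : Fin n → ℝ, (∀ i, 0 < u i) ∧ 0 ≤ C *ᵥ u
  | 0, _, _, _ => ⟨0, fun i => i.elim0, fun i => i.elim0⟩
  | n + 1, C, hC, hZ => by
    have hsymm := isHermitian_iff_isSymm.mp hC.isHermitian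
    set b : Fin n → ℝ := fun j => C 0 j.succ
    have hb : ∀ j, b j ≤ 0 := fun j => hZ 0 j.succ (Fin.succ_ne_zero j).symm
    have mulVec_cons_zero : ∀ t y, (C *ᵥ Fin.cons t y) 0 = C 0 0 * t + b ⬝ᵥ y := by
      intro t y
      simp [mulVec, dotProduct, Fin.sum_univ_succ, b]
    have mulVec_cons_succ : ∀ t y (k : Fin n),
        (C *ᵥ Fin.cons t y) k.succ = b k * t + (C.submatrix Fin.succ Fin.succ *ᵥ y) k := by
      intro t y k
      simp [mulVec, dotProduct, Fin.sum_univ_succ, b, hsymm.apply k.succ 0]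
    by_cases hb0 : b = 0
    · obtain ⟨u, hu, hCu⟩ := exists_pos_mulVec_nonneg_of_posSemidef (hC.submatrix Fin.succ)
        fun i j hij => hZ _ _ (Fin.succ_injective _ |>.ne hij)
      refine ⟨Fin.cons 1 u, Fin.cases one_pos hu, Fin.cases ?_ fun k => ?_⟩
      · simpa [mulVec_cons_zero, hb0] using hC.diag_nonneg
      · simpa [mulVec_cons_succ, hb0] using hCu k
    · have hpivot : 0 < C 0 0 := by
        refine hC.diag_nonneg.lt_of_ne fun h => hb0 (funext fun j => ?_)
        exact (hsymm.apply 0 j.succ).symm.trans (hC.apply_eq_zero_of_diag_eq_zero h.symm j.succ)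
      obtain ⟨u, hu, hSu⟩ := exists_pos_mulVec_nonneg_of_posSemidef
        (posSemidef_schurComplementAtZero hC hpivot)
        fun i j hij => schurComplementAtZero_apply_nonpos hpivot.le hZ hij
      have hbu : b ⬝ᵥ u < 0 := by
        obtain ⟨j, hj⟩ := Function.ne_iff.mp hb0
        exact Finset.sum_neg' (fun i _ => mul_nonpos_of_nonpos_of_nonneg (hb i) (hu i).le)
          ⟨j, mem_univ j, mul_neg_of_neg_of_pos ((hb j).lt_of_ne hj) (hu j)⟩
      -- this choice of the first coordinate turns the other rows of `C` into those of the
      -- Schur complement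
      refine ⟨Fin.cons (-(b ⬝ᵥ u) / C 0 0) u, Fin.cases ?_ hu, Fin.cases ?_ fun k => ?_⟩
      · exact div_pos (neg_pos.mpr hbu) hpivot
      · rw [Pi.zero_apply, mulVec_cons_zero, mul_div_cancel₀ _ hpivot.ne', neg_add_cancel]
      · have h := hSu k
        rw [Pi.zero_apply, schurComplementAtZero_mulVec] at h
        rw [Pi.zero_apply, mulVec_cons_succ]
        convert h using 1
        ring

end ZMatrix

section Comparison

variable {n : ℕ}

def comparisonMatrix (M : Matrix (Fin n) (Fin n) ℂ) : Matrix (Fin n) (Fin n) ℝ :=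
  of fun i j => if i = j then (M i i).re else -‖M i j‖

lemma comparisonMatrix_apply_nonpos (M : Matrix (Fin n) (Fin n) ℂ) {i j : Fin n} (hij : i ≠ j) :
    comparisonMatrix M i j ≤ 0 := by
  simp [comparisonMatrix, hij]

lemma comparisonMatrix_mulVec_apply (M : Matrix (Fin n) (Fin n) ℂ) (u : Fin n → ℝ) (i : Fin n) :
    (comparisonMatrix M *ᵥ u) i = (M i i).re * u i - ∑ j ∈ univ.erase i, ‖M i j‖ * u j := by
  rw [mulVec, dotProduct, ← Finset.add_sum_erase _ _ (mem_univ i), sub_eq_add_neg,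
    ← Finset.sum_neg_distrib]
  congr 1
  · simp [comparisonMatrix]
  · exact Finset.sum_congr rfl fun j hj => by
      simp [comparisonMatrix, Ne.symm (ne_of_mem_erase hj)]

lemma comparisonMatrix_sub_smul_one (M : Matrix (Fin n) (Fin n) ℂ) (s : ℝ) :
    comparisonMatrix (M - (s : ℂ) • 1) = comparisonMatrix M - s • 1 := by
  ext i j
  by_cases hij : i = j
  · subst hij
    simp [comparisonMatrix]
  · simp [comparisonMatrix, hij]

lemma sum_norm_mul_abs_mul_abs_le_frobNorm (A : Matrix (Fin n) (Fin n) ℂ) (x : Fin n → ℝ) :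
    ∑ i, ∑ j, ‖A i j‖ * (|x i| * |x j|) ≤ frobNorm A * (x ⬝ᵥ x) := by
  have hx : √(∑ p : Fin n × Fin n, (|x p.1| * |x p.2|) ^ 2) = x ⬝ᵥ x := by
    rw [Fintype.sum_prod_type]
    simp_rw [mul_pow, sq_abs, ← Finset.mul_sum, ← Finset.sum_mul, ← sq]
    rw [Real.sqrt_sq (Finset.sum_nonneg fun i _ => sq_nonneg _)]
    simp [dotProduct, sq]
  have := Real.sum_mul_le_sqrt_mul_sqrt univ (fun p : Fin n × Fin n => ‖A p.1 p.2‖)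
    (fun p => |x p.1| * |x p.2|)
  rwa [hx, Fintype.sum_prod_type, Fintype.sum_prod_type] at this

lemma neg_frobNorm_mul_le_dotProduct_comparisonMatrix_mulVec (A : Matrix (Fin n) (Fin n) ℂ)
    (x : Fin n → ℝ) : -(frobNorm A * (x ⬝ᵥ x)) ≤ x ⬝ᵥ comparisonMatrix A *ᵥ x := by
  have hterm : ∀ i j, -(‖A i j‖ * (|x i| * |x j|)) ≤ x i * (comparisonMatrix A i j * x j) := by
    intro i j
    by_cases hij : i = j
    · subst hij
      have := neg_le_of_abs_le (Complex.abs_re_le_norm (A i i))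
      simp only [comparisonMatrix, of_apply, ↓reduceIte, ← abs_mul, abs_mul_self]
      nlinarith [mul_self_nonneg (x i)]
    · simp only [comparisonMatrix, of_apply, if_neg hij, ← abs_mul]
      nlinarith [le_abs_self (x i * x j), norm_nonneg (A i j)]
  calc -(frobNorm A * (x ⬝ᵥ x)) ≤ -∑ i, ∑ j, ‖A i j‖ * (|x i| * |x j|) :=
        neg_le_neg (sum_norm_mul_abs_mul_abs_le_frobNorm A x)
    _ ≤ x ⬝ᵥ comparisonMatrix A *ᵥ x := by
        simp only [dotProduct, mulVec, Finset.mul_sum, ← Finset.sum_neg_distrib]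
        exact Finset.sum_le_sum fun i _ => Finset.sum_le_sum fun j _ => hterm i j

lemma posSemidef_comparisonMatrix_of_frobNorm_sub_smul_one_le {M : Matrix (Fin n) (Fin n) ℂ}
    (hM : M.IsHermitian) {s : ℝ} (hs : frobNorm (M - (s : ℂ) • 1) ≤ s) :
    (comparisonMatrix M).PosSemidef := by
  refine .of_dotProduct_mulVec_nonneg ?_ fun x => ?_
  · refine isHermitian_iff_isSymm.mpr (IsSymm.ext fun i j => ?_)
    by_cases hij : i = j
    · rw [hij]
    · simp [comparisonMatrix, hij, Ne.symm hij, ← hM.apply i j]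
  · have h := neg_frobNorm_mul_le_dotProduct_comparisonMatrix_mulVec (M - (s : ℂ) • 1) x
    rw [comparisonMatrix_sub_smul_one, sub_mulVec, dotProduct_sub, smul_mulVec, one_mulVec,
      dotProduct_smul, smul_eq_mul] at h
    have hxx : 0 ≤ x ⬝ᵥ x := Finset.sum_nonneg fun i _ => mul_self_nonneg (x i)
    rw [star_trivial]
    nlinarith [mul_nonneg (sub_nonneg.mpr hs) hxx]

end Comparison

section Incoherence

variable {n : ℕ}

lemma suppCard_le_card {v : Fin n → ℂ} {s : Finset (Fin n)} (h : ∀ p ∉ s, v p = 0) :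
    suppCard v ≤ s.card :=
  card_le_card fun p hp => by_contra fun hps => (mem_filter.mp hp).2 (h p hps)

lemma suppCard_mul_le (d v : Fin n → ℂ) : suppCard (d * v) ≤ suppCard v :=
  suppCard_le_card fun p hp => by simp_all

lemma suppCard_smul_le (a : ℂ) (v : Fin n → ℂ) : suppCard (a • v) ≤ suppCard v :=
  suppCard_le_card fun p hp => by simp_all

lemma kIncoherent_zero (k : ℕ) : KIncoherent k (0 : Matrix (Fin n) (Fin n) ℂ) :=
  ⟨0, Fin.elim0, fun i => i.elim0, by simp⟩

lemma kIncoherent_vecMulVec {k : ℕ} {v : Fin n → ℂ} (hv : suppCard v ≤ k) :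
    KIncoherent k (vecMulVec v (star v)) :=
  ⟨1, fun _ => v, fun _ => hv, by simp⟩

namespace KIncoherent

variable {k : ℕ} {X Y : Matrix (Fin n) (Fin n) ℂ}

lemma add (hX : KIncoherent k X) (hY : KIncoherent k Y) : KIncoherent k (X + Y) := by
  obtain ⟨m, v, hv, rfl⟩ := hX
  obtain ⟨m', v', hv', rfl⟩ := hY
  exact ⟨m + m', Fin.append v v', Fin.addCases (by simpa using hv) (by simpa using hv'),
    by simp [Fin.sum_univ_add]⟩

lemma sum {ι : Type*} (s : Finset ι) {X : ι → Matrix (Fin n) (Fin n) ℂ}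
    (h : ∀ i ∈ s, KIncoherent k (X i)) : KIncoherent k (∑ i ∈ s, X i) :=
  Finset.sum_induction _ _ (fun _ _ => add) (kIncoherent_zero k) h

lemma mono {l : ℕ} (hkl : k ≤ l) (hX : KIncoherent k X) : KIncoherent l X := by
  obtain ⟨m, v, hv, rfl⟩ := hX
  exact ⟨m, v, fun i => (hv i).trans hkl, rfl⟩

lemma posSemidef (hX : KIncoherent k X) : X.PosSemidef := by
  obtain ⟨m, v, -, rfl⟩ := hX
  exact posSemidef_sum _ fun i _ => posSemidef_vecMulVec_self_star (v i)

lemma ofReal_smul {c : ℝ} (hc : 0 ≤ c) (hX : KIncoherent k X) :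
    KIncoherent k ((c : ℂ) • X) := by
  obtain ⟨m, v, hv, rfl⟩ := hX
  have hsq : star (√c : ℂ) * (√c : ℂ) = c := by
    rw [Complex.star_def, Complex.conj_ofReal, ← Complex.ofReal_mul, Real.mul_self_sqrt hc]
  refine ⟨m, fun i => (√c : ℂ) • v i, fun i => (suppCard_smul_le _ (v i)).trans (hv i), ?_⟩
  simp only [Finset.smul_sum, star_smul, vecMulVec_smul, smul_vecMulVec, smul_smul, hsq]

lemma diagonal_mul_mul_diagonal (d : Fin n → ℂ) (hX : KIncoherent k X) :
    KIncoherent k (diagonal d * X * diagonal (star d)) := by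
  obtain ⟨m, v, hv, rfl⟩ := hX
  refine ⟨m, fun i => d * v i, fun i => (suppCard_mul_le d (v i)).trans (hv i), ?_⟩
  simp only [Finset.mul_sum, Finset.sum_mul]
  refine Finset.sum_congr rfl fun i _ => ?_
  ext p q
  simp only [mul_diagonal, diagonal_mul, vecMulVec_apply, Pi.star_apply, star_mul', Pi.mul_apply]
  ring

end KIncoherent

lemma vecMulVec_single_star_single {ι R : Type*} [DecidableEq ι] [Semiring R] [StarRing R]
    (i j : ι) (a b : R) :
    vecMulVec (Pi.single i a) (star (Pi.single j b)) = single i j (a * star b) := by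
  ext p q
  simp only [vecMulVec_apply, single_apply, Pi.star_apply, Pi.single_apply]
  split_ifs <;> simp_all

lemma kIncoherent_one_diagonal {d : Fin n → ℝ} (hd : 0 ≤ d) :
    KIncoherent 1 (diagonal fun i => (d i : ℂ)) := by
  have hsq : ∀ i, (√(d i) : ℂ) * star (√(d i) : ℂ) = d i := fun i => by
    rw [Complex.star_def, Complex.conj_ofReal, ← Complex.ofReal_mul, Real.mul_self_sqrt (hd i)]
  have hdiag : (diagonal fun i => (d i : ℂ)) =
      ∑ i, vecMulVec (Pi.single i (√(d i) : ℂ)) (star (Pi.single i (√(d i) : ℂ))) := by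
    simp only [vecMulVec_single_star_single, hsq]
    ext p q
    simp [Matrix.sum_apply, single_apply, diagonal_apply, ite_and, Finset.sum_ite_eq']
  rw [hdiag]
  exact KIncoherent.sum _ fun i _ => kIncoherent_vecMulVec <|
    (suppCard_le_card (s := {i}) fun p hp => by simp_all).trans (card_singleton i).le

def pairVec (i j : Fin n) (z : ℂ) : Fin n → ℂ :=
  Pi.single i (√‖z‖ : ℂ) + Pi.single j (star z / √‖z‖)

lemma suppCard_pairVec_le (i j : Fin n) (z : ℂ) : suppCard (pairVec i j z) ≤ 2 :=
  (suppCard_le_card (s := {i, j}) fun p hp => by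
    simp only [mem_insert, mem_singleton, not_or] at hp
    simp [pairVec, hp.1, hp.2]).trans card_le_two

lemma vecMulVec_pairVec (i j : Fin n) (z : ℂ) :
    vecMulVec (pairVec i j z) (star (pairVec i j z)) =
      single i i (‖z‖ : ℂ) + single j j (‖z‖ : ℂ) + single i j z + single j i (star z) := by
  by_cases hz : z = 0
  · subst hz
    ext p q
    simp [pairVec, vecMulVec_apply]
  simp only [pairVec, star_add, vecMulVec_add, add_vecMulVec, vecMulVec_single_star_single]
  set s : ℂ := ((Real.sqrt ‖z‖ : ℝ) : ℂ)
  have hs : s ≠ 0 := by simpa [s] using hz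
  have hstar : star s = s := Complex.conj_ofReal _
  have hss : s * s = ‖z‖ := by
    rw [← Complex.ofReal_mul, Real.mul_self_sqrt (norm_nonneg z)]
  have hzz : star z * z = (‖z‖ : ℂ) ^ 2 := Complex.conj_mul' z
  have h1 : s * star s = ‖z‖ := by rw [hstar, hss]
  have h2 : star z / s * star s = star z := by rw [hstar, div_mul_cancel₀ _ hs]
  have h3 : s * star (star z / s) = z := by rw [star_div₀, star_star, hstar, mul_div_cancel₀ _ hs]
  have h4 : star z / s * star (star z / s) = ‖z‖ := by
    rw [star_div₀, star_star, hstar, div_mul_div_comm, hzz, hss]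
    field_simp
  rw [h1, h2, h3, h4]
  abel

lemma sum_vecMulVec_pairVec {O : Matrix (Fin n) (Fin n) ℂ} (hO : O.IsHermitian) :
    ∑ i, ∑ j, vecMulVec (pairVec i j (O i j)) (star (pairVec i j (O i j))) =
      (2 : ℂ) • (diagonal (fun i => ((∑ j, ‖O i j‖ : ℝ) : ℂ)) + O) := by
  have hnorm : ∀ i j, ‖O j i‖ = ‖O i j‖ := fun i j => by rw [← hO.apply i j, norm_star]
  have hconj : ∀ i j, starRingEnd ℂ (O j i) = O i j := hO.apply
  simp only [vecMulVec_pairVec, Finset.sum_add_distrib]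
  ext p q
  simp only [Matrix.add_apply, Matrix.sum_apply, single_apply, Matrix.smul_apply, diagonal_apply]
  by_cases hpq : p = q
  · subst hpq
    simp only [ite_and, and_self, sum_ite_irrel, sum_const_zero, sum_ite_eq', mem_univ,
      ↓reduceIte, hnorm, RCLike.star_def, hconj, Complex.ofReal_sum, smul_eq_mul]
    ring
  · simp only [ite_and, sum_ite_irrel, sum_const_zero, sum_ite_eq', mem_univ, ↓reduceIte, hpq,
      add_zero, zero_add, RCLike.star_def, hconj, smul_eq_mul]
    ring

lemma kIncoherent_two_of_diagDominant {N : Matrix (Fin n) (Fin n) ℂ} (hN : N.IsHermitian)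
    (hdom : ∀ i, ∑ j ∈ univ.erase i, ‖N i j‖ ≤ (N i i).re) : KIncoherent 2 N := by
  set O : Matrix (Fin n) (Fin n) ℂ := of fun i j => if i = j then 0 else N i j
  have hO : O.IsHermitian := by
    ext i j
    by_cases hij : i = j
    · simp [O, hij]
    · simp [O, hij, Ne.symm hij, ← hN.apply i j]
  have hR : ∀ i, ∑ j, ‖O i j‖ = ∑ j ∈ univ.erase i, ‖N i j‖ := fun i => by
    rw [← Finset.add_sum_erase _ _ (mem_univ i)]
    simp +contextual [O, Finset.sum_congr, Ne.symm]
  -- the ordered pairs `(i, j)` and `(j, i)` give the same rank-one matrix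
  have hsplit : N = (diagonal fun i => (((N i i).re - ∑ j, ‖O i j‖ : ℝ) : ℂ)) +
      ((2⁻¹ : ℝ) : ℂ) • ∑ i, ∑ j, vecMulVec (pairVec i j (O i j)) (star (pairVec i j (O i j))) := by
    rw [sum_vecMulVec_pairVec hO, smul_smul]
    ext p q
    by_cases hpq : p = q
    · subst hpq
      simpa [O] using (hN.coe_re_apply_self p).symm
    · simp [O, hpq]
  rw [hsplit]
  refine (kIncoherent_one_diagonal fun i => ?_).mono one_le_two |>.add
    (KIncoherent.ofReal_smul (by norm_num) <| KIncoherent.sum _ fun i _ =>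
      KIncoherent.sum _ fun j _ => kIncoherent_vecMulVec (suppCard_pairVec_le _ _ _))
  simpa [hR] using hdom i

lemma kIncoherent_two_of_comparisonMatrix_mulVec_nonneg {M : Matrix (Fin n) (Fin n) ℂ}
    (hM : M.IsHermitian) {u : Fin n → ℝ} (hu : ∀ i, 0 < u i) (hCu : 0 ≤ comparisonMatrix M *ᵥ u) :
    KIncoherent 2 M := by
  set D : Fin n → ℂ := fun i => (u i : ℂ)
  set E : Fin n → ℂ := fun i => ((u i)⁻¹ : ℝ)
  have hD : star D = D := funext fun i => Complex.conj_ofReal (u i)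
  have hE : star E = E := funext fun i => Complex.conj_ofReal _
  have hN : (diagonal D * M * diagonal D).IsHermitian := by
    simpa [hD] using isHermitian_mul_mul_conjTranspose (diagonal D) hM
  have hdom : ∀ i, ∑ j ∈ univ.erase i, ‖(diagonal D * M * diagonal D) i j‖ ≤
      ((diagonal D * M * diagonal D) i i).re := fun i => by
    have h := hCu i
    rw [Pi.zero_apply, comparisonMatrix_mulVec_apply, sub_nonneg] at h
    have hnorm : ∀ j, ‖(u i : ℂ) * M i j * (u j : ℂ)‖ = u i * (‖M i j‖ * u j) := fun j => by
      rw [norm_mul, norm_mul, Complex.norm_real, Complex.norm_real, Real.norm_of_nonneg (hu i).le,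
        Real.norm_of_nonneg (hu j).le, mul_assoc]
    simp only [diagonal_mul, mul_diagonal, D]
    rw [Finset.sum_congr rfl fun j _ => hnorm j, ← Finset.mul_sum, Complex.re_mul_ofReal,
      Complex.re_ofReal_mul, mul_assoc]
    exact mul_le_mul_of_nonneg_left h (hu i).le
  have hED : diagonal E * diagonal D = 1 := by
    rw [diagonal_mul_diagonal, ← diagonal_one]
    exact congrArg diagonal (funext fun i => by simp [E, D, (hu i).ne'])
  have hDE : diagonal D * diagonal E = 1 := by
    rw [diagonal_mul_diagonal, ← diagonal_one]
    exact congrArg diagonal (funext fun i => by simp [E, D, (hu i).ne'])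
  have hM_eq : M = diagonal E * (diagonal D * M * diagonal D) * diagonal (star E) := by
    rw [hE, ← Matrix.mul_assoc, ← Matrix.mul_assoc, hED, Matrix.one_mul, Matrix.mul_assoc, hDE,
      Matrix.mul_one]
  rw [hM_eq]
  exact (kIncoherent_two_of_diagDominant hN hdom).diagonal_mul_mul_diagonal E

end Incoherence

theorem kIncoherent_of_close_to_scaled_id_general (n : ℕ)
    (M : Matrix (Fin n) (Fin n) ℂ) (hM : M.IsHermitian)
    (hclose : frobNorm (M - ((n : ℂ))⁻¹ • (1 : Matrix (Fin n) (Fin n) ℂ)) ≤ 1 / (n : ℝ)) :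
    M.PosSemidef ∧ KIncoherent 2 M ∧ ∀ k : ℕ, 2 ≤ k → k ≤ n → KIncoherent k M := by
  have hC : (comparisonMatrix M).PosSemidef :=
    posSemidef_comparisonMatrix_of_frobNorm_sub_smul_one_le hM (s := (n : ℝ)⁻¹)
      (by simpa using hclose)
  obtain ⟨u, hu, hCu⟩ := exists_pos_mulVec_nonneg_of_posSemidef hC
    fun _ _ hij => comparisonMatrix_apply_nonpos M hij
  have h2 := kIncoherent_two_of_comparisonMatrix_mulVec_nonneg hM hu hCu
  exact ⟨h2.posSemidef, h2, fun k hk _ => h2.mono hk⟩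

/-- If a Hermitian matrix `M` satisfies `‖M - I/n‖_F ≤ 1/n`, then `M` is positive
semidefinite and `2`-incoherent (and hence `k`-incoherent for every `2 ≤ k ≤ n`). -/
theorem kIncoherent_of_close_to_scaled_id (n : ℕ) (hn : 2 ≤ n)
    (M : Matrix (Fin n) (Fin n) ℂ) (hM : M.IsHermitian)
    (hclose : frobNorm (M - ((n : ℂ))⁻¹ • (1 : Matrix (Fin n) (Fin n) ℂ)) ≤ 1 / (n : ℝ)) :
    M.PosSemidef ∧ KIncoherent 2 M ∧ ∀ k : ℕ, 2 ≤ k → k ≤ n → KIncoherent k M :=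
  kIncoherent_of_close_to_scaled_id_general n M hM hclose
end
end
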